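/- arXiv:2107.07874 — 2 statements merged into one kernel-verified Lean document; each statement's English description precedes it below -/
import Mathlib

section
/- Let ψ be a classical solution on [0,T] of ∂ₜψ + ∂ₓ( f(ψ + ũ) ) = −δ ∂ₓ³ψ − ν ∂ₓ⁴ψ with initial data ψ₀ = ψ(0,·). Then there exists a constant C_{ψ₀} > 0, depending only on ν and ‖ψ₀‖_{L²} and not on T, such that ∫₀ᵗ ( sup_{x∈ℝ} |ψ(τ,x)| )⁸ dτ + ∫₀ᵗ ( sup_{x∈ℝ} |∂ₓψ(τ,x)| )^{8/3} dτ ≤ C_{ψ₀} for every t ∈ [0,T]. -/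
set_option maxHeartbeats 1000000


open MeasureTheory Filter Set intervalIntegral

/-- The `L²(ℝ)` norm `(∫ℝ |g(x)|² dx)^(1/2)`. -/
noncomputable def L2Norm (g : ℝ → ℝ) : ℝ := (∫ x : ℝ, (g x) ^ 2) ^ ((1 : ℝ) / 2)

/-- `g ∈ L²(ℝ)`, i.e. `∫ℝ |g(x)|² dx < ∞`. -/
def MemL2 (g : ℝ → ℝ) : Prop := MeasureTheory.Integrable fun x => (g x) ^ 2

/-- A classical solution `ψ` of the perturbation equation
`∂ₜψ + ∂ₓ(f(ψ + uTilde)) = -δ ∂ₓ³ψ - ν ∂ₓ⁴ψ` on the time interval `I`: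
`ψ(t,·)` is (four times continuously) differentiable in space, the spatial derivatives
`∂ₓᵏψ` (`k ≤ 4`) and the time derivative are continuous on `I × ℝ`, the equation holds
pointwise, `∂ₓᵏψ(t,·) ∈ L²(ℝ)` and `∂ₓᵏψ(t,x) → 0` as `|x| → ∞` for `k ≤ 4`, and the
`L²` norms `‖∂ₓᵏψ(t,·)‖` are continuous in `t`. -/
structure IsClassicalSol (f : ℝ → ℝ) (δ ν uTilde : ℝ) (I : Set ℝ) (ψ : ℝ → ℝ → ℝ) : Prop where
  smooth : ∀ t ∈ I, ContDiff ℝ 4 (ψ t)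
  jointCont : ∀ k : ℕ, k ≤ 4 →
    ContinuousOn (fun p : ℝ × ℝ => iteratedDeriv k (ψ p.1) p.2) (I ×ˢ (univ : Set ℝ))
  pde : ∀ t ∈ I, ∀ x : ℝ, HasDerivWithinAt (fun s => ψ s x)
    (-(deriv (fun y => f (ψ t y + uTilde)) x) - δ * iteratedDeriv 3 (ψ t) x
      - ν * iteratedDeriv 4 (ψ t) x) I t
  timeDerivCont : ContinuousOn (fun p : ℝ × ℝ =>
    -(deriv (fun y => f (ψ p.1 y + uTilde)) p.2) - δ * iteratedDeriv 3 (ψ p.1) p.2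
      - ν * iteratedDeriv 4 (ψ p.1) p.2) (I ×ˢ (univ : Set ℝ))
  memL2 : ∀ t ∈ I, ∀ k : ℕ, k ≤ 4 → MemL2 (iteratedDeriv k (ψ t))
  decay : ∀ t ∈ I, ∀ k : ℕ, k ≤ 4 →
    Tendsto (iteratedDeriv k (ψ t)) (cocompact ℝ) (nhds 0)
  normCont : ∀ k : ℕ, k ≤ 4 → ContinuousOn (fun t => L2Norm (iteratedDeriv k (ψ t))) I

lemma myIntegralDerivZero {H H' : ℝ → ℝ} (hd : ∀ x, HasDerivAt H (H' x) x)
    (hint : Integrable H') (hten : Tendsto H (cocompact ℝ) (nhds 0)) :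
    ∫ x, H' x = 0 := by
  have hTop : Tendsto H atTop (nhds 0) := hten.mono_left atTop_le_cocompact
  have hBot : Tendsto H atBot (nhds 0) := hten.mono_left atBot_le_cocompact
  have h1 : ∫ x in Iic (0:ℝ), H' x = H 0 - 0 :=
    integral_Iic_of_hasDerivAt_of_tendsto' (fun x _ => hd x) hint.integrableOn hBot
  have h2 : ∫ x in Ioi (0:ℝ), H' x = 0 - H 0 :=
    integral_Ioi_of_hasDerivAt_of_tendsto' (fun x _ => hd x) hint.integrableOn hTop
  rw [← integral_Iic_add_Ioi (b := (0:ℝ)) hint.integrableOn hint.integrableOn, h1, h2]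
  ring

lemma myCS {g₁ g₂ : ℝ → ℝ} (h₁m : AEStronglyMeasurable g₁ volume)
    (h₂m : AEStronglyMeasurable g₂ volume)
    (h₁ : Integrable (fun x => g₁ x ^ 2)) (h₂ : Integrable (fun x => g₂ x ^ 2)) :
    ∫ x, |g₁ x * g₂ x| ≤ Real.sqrt (∫ x, g₁ x ^ 2) * Real.sqrt (∫ x, g₂ x ^ 2) := by
  have hc : Real.HolderConjugate 2 2 := by
    rw [Real.holderConjugate_iff_eq_conjExponent (by norm_num)]; norm_num
  have h2e : (ENNReal.ofReal 2) = 2 := by norm_num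
  have hrp : ∀ y : ℝ, |y| ^ (2:ℝ) = y ^ 2 := by
    intro y
    rw [show (2:ℝ) = ((2:ℕ):ℝ) by norm_num, Real.rpow_natCast, sq_abs]
  have m₁ : MemLp (fun x => |g₁ x|) (ENNReal.ofReal 2) volume := by
    rw [h2e]
    exact (memLp_two_iff_integrable_sq (h₁m.norm.congr (Eventually.of_forall fun x => Real.norm_eq_abs _))).2 (by simpa [sq_abs] using h₁)
  have m₂ : MemLp (fun x => |g₂ x|) (ENNReal.ofReal 2) volume := by
    rw [h2e]
    exact (memLp_two_iff_integrable_sq (h₂m.norm.congr (Eventually.of_forall fun x => Real.norm_eq_abs _))).2 (by simpa [sq_abs] using h₂)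
  have := integral_mul_le_Lp_mul_Lq_of_nonneg hc
    (Eventually.of_forall fun x => abs_nonneg (g₁ x))
    (Eventually.of_forall fun x => abs_nonneg (g₂ x)) m₁ m₂
  simp only [hrp] at this
  calc ∫ x, |g₁ x * g₂ x| = ∫ x, |g₁ x| * |g₂ x| := by simp [abs_mul]
    _ ≤ (∫ x, g₁ x ^ 2) ^ ((1:ℝ)/2) * (∫ x, g₂ x ^ 2) ^ ((1:ℝ)/2) := this
    _ = Real.sqrt (∫ x, g₁ x ^ 2) * Real.sqrt (∫ x, g₂ x ^ 2) := by
        rw [Real.sqrt_eq_rpow, Real.sqrt_eq_rpow]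
lemma myProdInt {g₁ g₂ : ℝ → ℝ} (h₁m : AEStronglyMeasurable g₁ volume)
    (h₂m : AEStronglyMeasurable g₂ volume)
    (h₁ : Integrable (fun x => g₁ x ^ 2)) (h₂ : Integrable (fun x => g₂ x ^ 2)) :
    Integrable (fun x => g₁ x * g₂ x) := by
  refine (h₁.add h₂).mono' (h₁m.mul h₂m) (Eventually.of_forall fun x => ?_)
  simp only [Pi.add_apply, Real.norm_eq_abs, abs_mul]
  nlinarith [sq_nonneg (|g₁ x| - |g₂ x|), abs_nonneg (g₁ x), abs_nonneg (g₂ x),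
    sq_abs (g₁ x), sq_abs (g₂ x)]

lemma myAgmon {g g' : ℝ → ℝ} (hd : ∀ x, HasDerivAt g (g' x) x)
    (hgc : Continuous g) (hg'c : Continuous g')
    (h₁ : Integrable (fun x => g x ^ 2)) (h₂ : Integrable (fun x => g' x ^ 2))
    (hten : Tendsto g (cocompact ℝ) (nhds 0)) (x : ℝ) :
    g x ^ 2 ≤ 2 * Real.sqrt (∫ y, g y ^ 2) * Real.sqrt (∫ y, g' y ^ 2) := by
  have hmul : Integrable (fun y => g y * g' y) :=
    myProdInt hgc.aestronglyMeasurable hg'c.aestronglyMeasurable h₁ h₂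
  have hmul2 : Integrable (fun y => 2 * (g y * g' y)) := hmul.const_mul 2
  have hd2 : ∀ y, HasDerivAt (fun z => g z ^ 2) (2 * (g y * g' y)) y := by
    intro y
    have : HasDerivAt (fun z => g z ^ 2) _ y := (hd y).pow 2
    simpa [pow_one, mul_assoc, mul_comm, mul_left_comm] using this
  have htend2 : Tendsto (fun z => g z ^ 2) atBot (nhds 0) := by
    have := (hten.mono_left atBot_le_cocompact).pow 2
    simpa using this
  have key : ∫ y in Iic x, 2 * (g y * g' y) = g x ^ 2 - 0 :=
    integral_Iic_of_hasDerivAt_of_tendsto' (fun y _ => hd2 y) hmul2.integrableOn htend2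
  have habs : Integrable (fun y => 2 * |g y * g' y|) := hmul.abs.const_mul 2
  have step1 : g x ^ 2 ≤ ∫ y in Iic x, 2 * |g y * g' y| := by
    rw [← sub_zero (g x ^ 2), ← key]
    refine integral_mono_ae hmul2.integrableOn habs.integrableOn
      (Eventually.of_forall fun y => ?_)
    show 2 * (g y * g' y) ≤ 2 * |g y * g' y|
    have := le_abs_self (g y * g' y)
    linarith
  have step2 : ∫ y in Iic x, 2 * |g y * g' y| ≤ ∫ y, 2 * |g y * g' y| := by
    refine integral_mono_measure Measure.restrict_le_self
      (Eventually.of_forall fun y => by positivity) habs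
  have step3 : ∫ y, 2 * |g y * g' y| =  2 * ∫ y, |g y * g' y| := by
    rw [MeasureTheory.integral_const_mul]
  have := myCS hgc.aestronglyMeasurable hg'c.aestronglyMeasurable h₁ h₂
  calc g x ^ 2 ≤ ∫ y in Iic x, 2 * |g y * g' y| := step1
    _ ≤ ∫ y, 2 * |g y * g' y| := step2
    _ = 2 * ∫ y, |g y * g' y| := step3
    _ ≤ 2 * (Real.sqrt (∫ y, g y ^ 2) * Real.sqrt (∫ y, g' y ^ 2)) := by linarith
    _ = 2 * Real.sqrt (∫ y, g y ^ 2) * Real.sqrt (∫ y, g' y ^ 2) := by ring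

lemma myDerivSq {g g' g'' : ℝ → ℝ}
    (hd : ∀ x, HasDerivAt g (g' x) x) (hd' : ∀ x, HasDerivAt g' (g'' x) x)
    (hgc : Continuous g) (hg'c : Continuous g') (hg''c : Continuous g'')
    (h0 : Integrable (fun x => g x ^ 2)) (h1 : Integrable (fun x => g' x ^ 2))
    (h2 : Integrable (fun x => g'' x ^ 2))
    (t0 : Tendsto g (cocompact ℝ) (nhds 0)) (t1 : Tendsto g' (cocompact ℝ) (nhds 0)) :
    ∫ x, g' x ^ 2 ≤ Real.sqrt (∫ x, g x ^ 2) * Real.sqrt (∫ x, g'' x ^ 2) := by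
  have hmul : Integrable (fun y => g y * g'' y) :=
    myProdInt hgc.aestronglyMeasurable hg''c.aestronglyMeasurable h0 h2
  have hder : ∀ x, HasDerivAt (fun z => g z * g' z) (g' x ^ 2 + g x * g'' x) x := by
    intro x
    have : HasDerivAt (fun z => g z * g' z) _ x := (hd x).mul (hd' x)
    simpa [sq, mul_comm, mul_left_comm, add_comm] using this
  have hten : Tendsto (fun z => g z * g' z) (cocompact ℝ) (nhds 0) := by
    have := t0.mul t1
    simpa using this
  have hzero : ∫ x, (g' x ^ 2 + g x * g'' x) = 0 :=
    myIntegralDerivZero hder (h1.add hmul) hten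
  rw [integral_add h1 hmul] at hzero
  have habs : ∫ x, g x * g'' x ≤ ∫ x, |g x * g'' x| := by
    refine integral_mono_ae hmul hmul.abs (Eventually.of_forall fun y => le_abs_self _)
  have := myCS hgc.aestronglyMeasurable hg''c.aestronglyMeasurable h0 h2
  have heq : ∫ x, g' x ^ 2 = -∫ x, g x * g'' x := by linarith
  rw [heq]
  calc -∫ x, g x * g'' x = ∫ x, -(g x * g'' x) := (MeasureTheory.integral_neg _).symm
    _ ≤ ∫ x, |g x * g'' x| := integral_mono_ae hmul.neg hmul.abs
        (Eventually.of_forall fun y => neg_le_abs _)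
    _ ≤ _ := this
lemma mySpatial (f : ℝ → ℝ) (hf : ContDiff ℝ 2 f) (δ ν uTilde : ℝ) (g : ℝ → ℝ)
    (hg : ContDiff ℝ 4 g)
    (hint : ∀ k ≤ 4, Integrable (fun x => iteratedDeriv k g x ^ 2))
    (hdec : ∀ k ≤ 4, Tendsto (iteratedDeriv k g) (cocompact ℝ) (nhds 0))
    (D : ℝ → ℝ)
    (hD : ∀ x, D x = -(deriv (fun y => f (g y + uTilde)) x) - δ * iteratedDeriv 3 g x
      - ν * iteratedDeriv 4 g x)
    (hDcont : Continuous D) (hD2 : Integrable (fun x => D x ^ 2)) :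
    ∫ x, 2 * (g x * D x) = -(2 * ν) * ∫ x, iteratedDeriv 2 g x ^ 2 := by
  have hdk : ∀ k, k < 4 → ∀ x, HasDerivAt (iteratedDeriv k g) (iteratedDeriv (k+1) g x) x := by
    intro k hk x
    have hdiff : Differentiable ℝ (iteratedDeriv k g) :=
      hg.differentiable_iteratedDeriv k (by exact_mod_cast hk)
    have := (hdiff x).hasDerivAt
    rwa [← iteratedDeriv_succ] at this
  have hg0 : ∀ x, HasDerivAt g (iteratedDeriv 1 g x) x := by
    have := hdk 0 (by norm_num)
    simpa [iteratedDeriv_zero] using this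
  have hgc : Continuous g := by
    simpa [iteratedDeriv_zero] using hg.continuous_iteratedDeriv 0 (by exact_mod_cast Nat.zero_le 4)
  have hg0int : Integrable (fun x => g x ^ 2) := by
    simpa [iteratedDeriv_zero] using hint 0 (by norm_num)
  have hgdec : Tendsto g (cocompact ℝ) (nhds 0) := by
    simpa [iteratedDeriv_zero] using hdec 0 (by norm_num)
  have hf' : Differentiable ℝ f := hf.differentiable (by norm_num)
  have hf'c : Continuous (deriv f) := hf.continuous_deriv one_le_two
  set K : ℝ → ℝ := fun y => ∫ z in (0:ℝ)..y, z * deriv f (z + uTilde) with hKdef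
  have hKcont : Continuous fun z : ℝ => z * deriv f (z + uTilde) :=
    continuous_id.mul (hf'c.comp (continuous_add_right uTilde))
  have hKd : ∀ y, HasDerivAt K (y * deriv f (y + uTilde)) y := fun y =>
    (hKcont.integral_hasStrictDerivAt 0 y).hasDerivAt
  have hK0 : K 0 = 0 := integral_same
  have hKc : Continuous K := Differentiable.continuous fun y => (hKd y).differentiableAt
  have hDF : ∀ x, deriv (fun y => f (g y + uTilde)) x
      = deriv f (g x + uTilde) * iteratedDeriv 1 g x := by
    intro x
    exact (((hf' (g x + uTilde)).hasDerivAt).comp x ((hg0 x).add_const uTilde)).deriv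
  set H : ℝ → ℝ := fun x => 2 * K (g x)
    + δ * (2 * (g x * iteratedDeriv 2 g x) - iteratedDeriv 1 g x ^ 2)
    + ν * (2 * (g x * iteratedDeriv 3 g x) - 2 * (iteratedDeriv 1 g x * iteratedDeriv 2 g x))
    with hHdef
  have hH : ∀ x, HasDerivAt H
      (-(2 * (g x * D x)) - 2 * ν * iteratedDeriv 2 g x ^ 2) x := by
    intro x
    have t1 : HasDerivAt (fun x => K (g x))
        (g x * deriv f (g x + uTilde) * iteratedDeriv 1 g x) x :=
      (hKd (g x)).comp x (hg0 x)
    have t2 : HasDerivAt (fun x => g x * iteratedDeriv 2 g x)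
        (iteratedDeriv 1 g x * iteratedDeriv 2 g x + g x * iteratedDeriv 3 g x) x :=
      (hg0 x).mul (hdk 2 (by norm_num) x)
    have t3 : HasDerivAt (fun x => iteratedDeriv 1 g x ^ 2)
        (2 * iteratedDeriv 1 g x ^ 1 * iteratedDeriv 2 g x) x :=
      (hdk 1 (by norm_num) x).pow 2
    have t4 : HasDerivAt (fun x => g x * iteratedDeriv 3 g x)
        (iteratedDeriv 1 g x * iteratedDeriv 3 g x + g x * iteratedDeriv 4 g x) x :=
      (hg0 x).mul (hdk 3 (by norm_num) x)
    have t5 : HasDerivAt (fun x => iteratedDeriv 1 g x * iteratedDeriv 2 g x)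
        (iteratedDeriv 2 g x * iteratedDeriv 2 g x + iteratedDeriv 1 g x * iteratedDeriv 3 g x) x :=
      (hdk 1 (by norm_num) x).mul (hdk 2 (by norm_num) x)
    have hbig := ((t1.const_mul 2).add
        (((t2.const_mul 2).sub t3).const_mul δ)).add
        (((t4.const_mul 2).sub (t5.const_mul 2)).const_mul ν)
    have heq : 2 * (g x * deriv f (g x + uTilde) * iteratedDeriv 1 g x)
        + δ * (2 * (iteratedDeriv 1 g x * iteratedDeriv 2 g x + g x * iteratedDeriv 3 g x)
          - 2 * iteratedDeriv 1 g x ^ 1 * iteratedDeriv 2 g x)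
        + ν * (2 * (iteratedDeriv 1 g x * iteratedDeriv 3 g x + g x * iteratedDeriv 4 g x)
          - 2 * (iteratedDeriv 2 g x * iteratedDeriv 2 g x
            + iteratedDeriv 1 g x * iteratedDeriv 3 g x))
        = -(2 * (g x * D x)) - 2 * ν * iteratedDeriv 2 g x ^ 2 := by
      rw [hD x, hDF x]; ring
    rw [← heq]
    exact hbig
  have htenH : Tendsto H (cocompact ℝ) (nhds 0) := by
    have hKg : Tendsto (fun x => K (g x)) (cocompact ℝ) (nhds 0) := by
      have := (hKc.continuousAt (x := 0)).tendsto.comp hgdec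
      rwa [hK0] at this
    have d1 := hdec 1 (by norm_num)
    have d2 := hdec 2 (by norm_num)
    have d3 := hdec 3 (by norm_num)
    have hcomb := ((hKg.const_mul 2).add
        ((((hgdec.mul d2).const_mul 2).sub (d1.pow 2)).const_mul δ)).add
        ((((hgdec.mul d3).const_mul 2).sub ((d1.mul d2).const_mul 2)).const_mul ν)
    have h0 : (0:ℝ) = 2 * 0 + δ * (2 * (0 * 0) - 0 ^ 2) + ν * (2 * (0 * 0) - 2 * (0 * 0)) := by
      ring
    rw [hHdef, h0]
    exact hcomb
  have hgD : Integrable (fun x => g x * D x) :=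
    myProdInt hgc.aestronglyMeasurable hDcont.aestronglyMeasurable hg0int hD2
  have h2gD : Integrable (fun x => 2 * (g x * D x)) := hgD.const_mul 2
  have hg2sq : Integrable (fun x => 2 * ν * iteratedDeriv 2 g x ^ 2) :=
    (hint 2 (by norm_num)).const_mul (2 * ν)
  have hintH' : Integrable (fun x => -(2 * (g x * D x)) - 2 * ν * iteratedDeriv 2 g x ^ 2) :=
    h2gD.neg.sub hg2sq
  have hzero := myIntegralDerivZero hH hintH' htenH
  have hsplit : ∫ x, (-(2 * (g x * D x)) - 2 * ν * iteratedDeriv 2 g x ^ 2)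
      = (∫ x, -(2 * (g x * D x))) - ∫ x, 2 * ν * iteratedDeriv 2 g x ^ 2 :=
    integral_sub (by exact h2gD.neg) hg2sq
  rw [hsplit, MeasureTheory.integral_neg, MeasureTheory.integral_const_mul] at hzero
  rw [MeasureTheory.integral_const_mul] at hzero
  rw [MeasureTheory.integral_const_mul]
  linarith
lemma myEnergy (T : ℝ) (hT : 0 < T) (ψ : ℝ → ℝ → ℝ) (D : ℝ → ℝ → ℝ)
    (hjc : ContinuousOn (fun p : ℝ × ℝ => ψ p.1 p.2) (Icc 0 T ×ˢ (univ : Set ℝ)))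
    (hDc : ContinuousOn (fun p : ℝ × ℝ => D p.1 p.2) (Icc 0 T ×ˢ (univ : Set ℝ)))
    (hpde : ∀ s ∈ Icc 0 T, ∀ x : ℝ, HasDerivWithinAt (fun σ => ψ σ x) (D s x) (Icc 0 T) s)
    (hint0 : ∀ s ∈ Icc 0 T, Integrable (fun x => ψ s x ^ 2))
    (hintD : ∀ s ∈ Icc 0 T, Integrable (fun x => 2 * (ψ s x * D s x)))
    (CB : ℝ) (hCB : ∀ s ∈ Icc 0 T, ∫ x, ‖2 * (ψ s x * D s x)‖ ≤ CB)
    (s : ℝ) (hs : s ∈ Icc 0 T) :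
    IntegrableOn (fun τ => ∫ x, 2 * (ψ τ x * D τ x)) (Icc 0 s) ∧
    ∫ τ in Icc 0 s, (∫ x, 2 * (ψ τ x * D τ x))
      = (∫ x, ψ s x ^ 2) - ∫ x, ψ 0 x ^ 2 := by
  have h0T : (0:ℝ) ∈ Icc 0 T := ⟨le_rfl, hT.le⟩
  have hsubI : Icc (0:ℝ) s ⊆ Icc 0 T := Icc_subset_Icc le_rfl hs.2
  set μs := volume.restrict (Icc (0:ℝ) s) with hμs
  haveI : IsFiniteMeasure μs := by
    constructor
    rw [hμs, Measure.restrict_apply_univ]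
    exact measure_Icc_lt_top
  set Fp : ℝ × ℝ → ℝ := fun p => 2 * (ψ p.1 p.2 * D p.1 p.2) with hFp
  have hFc : ContinuousOn Fp (Icc 0 T ×ˢ (univ : Set ℝ)) :=
    continuousOn_const.mul (hjc.mul hDc)
  have hsub : (Icc (0:ℝ) s ×ˢ (univ : Set ℝ)) ⊆ (Icc 0 T ×ˢ (univ : Set ℝ)) :=
    prod_mono hsubI (subset_refl _)
  have hprodeq : μs.prod volume = (volume.prod volume).restrict (Icc 0 s ×ˢ (univ : Set ℝ)) := by
    rw [hμs, ← Measure.prod_restrict, Measure.restrict_univ]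
  have hmeasF : AEStronglyMeasurable Fp (μs.prod volume) := by
    rw [hprodeq]
    exact (hFc.mono hsub).aestronglyMeasurable (measurableSet_Icc.prod MeasurableSet.univ)
  have hIntF : Integrable Fp (μs.prod volume) := by
    refine (integrable_prod_iff hmeasF).2 ⟨?_, ?_⟩
    · refine (ae_restrict_iff' measurableSet_Icc).2 (Eventually.of_forall fun τ hτ => ?_)
      exact hintD τ (hsubI hτ)
    · refine Integrable.mono' (integrable_const CB) hmeasF.norm.integral_prod_right'
        ((ae_restrict_iff' measurableSet_Icc).2 (Eventually.of_forall fun τ hτ => ?_))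
      have h2 : 0 ≤ ∫ x, ‖Fp (τ, x)‖ := integral_nonneg fun x => norm_nonneg _
      rw [Real.norm_eq_abs, abs_of_nonneg h2]
      exact hCB τ (hsubI hτ)
  have hswap : ∫ τ in Icc 0 s, (∫ x, 2 * (ψ τ x * D τ x))
      = ∫ x, ∫ τ in Icc 0 s, 2 * (ψ τ x * D τ x) :=
    integral_integral_swap (f := fun τ x => 2 * (ψ τ x * D τ x)) hIntF
  have hFTC : ∀ x : ℝ, ∫ τ in Icc 0 s, 2 * (ψ τ x * D τ x) = ψ s x ^ 2 - ψ 0 x ^ 2 := by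
    intro x
    have hd : ∀ τ ∈ Icc 0 T, HasDerivWithinAt (fun σ => ψ σ x ^ 2)
        (2 * (ψ τ x * D τ x)) (Icc 0 T) τ := by
      intro τ hτ
      have h1 := (hpde τ hτ x).pow 2
      have h2 : (2:ℕ) * ψ τ x ^ (2-1) * D τ x = 2 * (ψ τ x * D τ x) := by
        push_cast; ring
      rw [h2] at h1
      exact h1
    have hcontOn : ContinuousOn (fun σ => ψ σ x ^ 2) (Icc 0 s) := fun τ hτ =>
      ((hd τ (hsubI hτ)).continuousWithinAt).mono hsubI
    have hderivIoo : ∀ τ ∈ Ioo 0 s, HasDerivWithinAt (fun σ => ψ σ x ^ 2)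
        (2 * (ψ τ x * D τ x)) (Ioi τ) τ := by
      intro τ hτ
      have hτT : τ < T := lt_of_lt_of_le hτ.2 hs.2
      have hmem : Icc (0:ℝ) T ∈ nhds τ := Icc_mem_nhds hτ.1 hτT
      exact ((hd τ ⟨hτ.1.le, hτT.le⟩).hasDerivAt hmem).hasDerivWithinAt
    have hti : IntervalIntegrable (fun τ => 2 * (ψ τ x * D τ x)) volume 0 s := by
      apply ContinuousOn.intervalIntegrable
      rw [uIcc_of_le hs.1]
      have hmap : MapsTo (fun τ : ℝ => (τ, x)) (Icc 0 s) (Icc 0 T ×ˢ (univ : Set ℝ)) :=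
        fun τ hτ => ⟨hsubI hτ, mem_univ _⟩
      exact hFc.comp ((continuous_id.prodMk continuous_const).continuousOn) hmap
    have := integral_eq_sub_of_hasDeriv_right_of_le hs.1 hcontOn hderivIoo hti
    rw [intervalIntegral.integral_of_le hs.1] at this
    rw [integral_Icc_eq_integral_Ioc]
    exact this
  constructor
  · exact hIntF.integral_prod_left
  · rw [hswap]
    have : ∫ x, ∫ τ in Icc 0 s, 2 * (ψ τ x * D τ x) = ∫ x, (ψ s x ^ 2 - ψ 0 x ^ 2) := by
      refine integral_congr_ae (Eventually.of_forall fun x => hFTC x)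
    rw [this]
    exact integral_sub (hint0 s hs) (hint0 0 h0T)


/-- Lemma 3.2. If `ψ` is a classical solution on `[0,T]` of
`∂ₜψ + ∂ₓ(f(ψ + uTilde)) = -δ ∂ₓ³ψ - ν ∂ₓ⁴ψ`, then there is `C > 0` depending only on
`ν` and `‖ψ(0,·)‖_{L²}` (here: only on `ν` and the value `r = ‖ψ₀‖_{L²}`, not on `T`)
such that `∫₀ᵗ (sup_x |ψ(τ,x)|)⁸ dτ + ∫₀ᵗ (sup_x |∂ₓψ(τ,x)|)^{8/3} dτ ≤ C` for every
`t ∈ [0,T]`. -/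
theorem sup_norm_time_integrals_bounded
    (ν : ℝ) (hν : 0 < ν) (r : ℝ) :
    ∃ C : ℝ, 0 < C ∧
      ∀ f : ℝ → ℝ, ContDiff ℝ 2 f → ∀ δ uTilde T : ℝ, 0 < T →
        ∀ ψ : ℝ → ℝ → ℝ, IsClassicalSol f δ ν uTilde (Icc 0 T) ψ →
        L2Norm (ψ 0) = r →
        ∀ t ∈ Icc (0 : ℝ) T,
          (∫ τ in (0:ℝ)..t, (⨆ x : ℝ, |ψ τ x|) ^ 8)
          + (∫ τ in (0:ℝ)..t, (⨆ x : ℝ, |deriv (ψ τ) x|) ^ ((8:ℝ)/3)) ≤ C := by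
  refine ⟨8 * r ^ 8 / ν + 2 * |r| ^ ((8:ℝ)/3) / ν + 1, by positivity, ?_⟩
  intro f hf δ uTilde T hT ψ hsol hr t ht
  have h0T : (0:ℝ) ∈ Icc 0 T := ⟨le_rfl, hT.le⟩
  have htT : Icc (0:ℝ) t ⊆ Icc 0 T := Icc_subset_Icc le_rfl ht.2
  -- abbreviations
  set N : ℕ → ℝ → ℝ := fun k s => ∫ x, iteratedDeriv k (ψ s) x ^ 2 with hN
  set E : ℝ → ℝ := fun s => ∫ x, ψ s x ^ 2 with hE
  set D : ℝ → ℝ → ℝ := fun s x =>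
    -(deriv (fun y => f (ψ s y + uTilde)) x) - δ * iteratedDeriv 3 (ψ s) x
      - ν * iteratedDeriv 4 (ψ s) x with hD
  -- basic facts
  have hNnn : ∀ k s, 0 ≤ N k s := fun k s => integral_nonneg fun x => sq_nonneg _
  have hEnn : ∀ s, 0 ≤ E s := fun s => integral_nonneg fun x => sq_nonneg _
  have hint : ∀ s ∈ Icc 0 T, ∀ k ≤ 4, Integrable (fun x => iteratedDeriv k (ψ s) x ^ 2) :=
    fun s hs k hk => hsol.memL2 s hs k hk
  have hint0 : ∀ s ∈ Icc 0 T, Integrable (fun x => ψ s x ^ 2) := by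
    intro s hs
    have := hint s hs 0 (by norm_num)
    simpa [iteratedDeriv_zero] using this
  have hcontk : ∀ s ∈ Icc 0 T, ∀ k : ℕ, k ≤ 4 → Continuous (iteratedDeriv k (ψ s)) :=
    fun s hs k hk => (hsol.smooth s hs).continuous_iteratedDeriv k (by exact_mod_cast hk)
  have hcont0 : ∀ s ∈ Icc 0 T, Continuous (ψ s) := by
    intro s hs
    simpa [iteratedDeriv_zero] using hcontk s hs 0 (by norm_num)
  have hdk : ∀ s ∈ Icc 0 T, ∀ k : ℕ, k < 4 → ∀ x,
      HasDerivAt (iteratedDeriv k (ψ s)) (iteratedDeriv (k+1) (ψ s) x) x := by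
    intro s hs k hk x
    have hdiff := (hsol.smooth s hs).differentiable_iteratedDeriv k (by exact_mod_cast hk)
    have := (hdiff x).hasDerivAt
    rwa [← iteratedDeriv_succ] at this
  have hd0 : ∀ s ∈ Icc 0 T, ∀ x, HasDerivAt (ψ s) (iteratedDeriv 1 (ψ s) x) x := by
    intro s hs
    have := hdk s hs 0 (by norm_num)
    simpa [iteratedDeriv_zero] using this
  have hdec0 : ∀ s ∈ Icc 0 T, Tendsto (ψ s) (cocompact ℝ) (nhds 0) := by
    intro s hs
    simpa [iteratedDeriv_zero] using hsol.decay s hs 0 (by norm_num)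
  have hL2eq : ∀ g : ℝ → ℝ, L2Norm g = Real.sqrt (∫ x, g x ^ 2) := by
    intro g; rw [L2Norm, Real.sqrt_eq_rpow]
  have hrnn : 0 ≤ r := by
    rw [← hr, hL2eq]; exact Real.sqrt_nonneg _
  have hE0 : E 0 = r ^ 2 := by
    have h1 : Real.sqrt (E 0) = r := by rw [← hr, hL2eq]
    rw [← h1, Real.sq_sqrt (hEnn 0)]
  -- uniform L² bounds on [0,T]
  have hbnd : ∀ k : ℕ, k ≤ 4 → ∃ M : ℝ, 0 ≤ M ∧ ∀ s ∈ Icc 0 T, Real.sqrt (N k s) ≤ M := by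
    intro k hk
    obtain ⟨M, hM⟩ := isCompact_Icc.exists_bound_of_continuousOn (hsol.normCont k hk)
    refine ⟨max M 0, le_max_right _ _, fun s hs => ?_⟩
    have h1 := hM s hs
    rw [Real.norm_eq_abs] at h1
    calc Real.sqrt (N k s) = L2Norm (iteratedDeriv k (ψ s)) := (hL2eq _).symm
      _ ≤ |L2Norm (iteratedDeriv k (ψ s))| := le_abs_self _
      _ ≤ M := h1
      _ ≤ max M 0 := le_max_left _ _
  obtain ⟨M0, hM0nn, hM0⟩ := hbnd 0 (by norm_num)
  obtain ⟨M1, hM1nn, hM1⟩ := hbnd 1 (by norm_num)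
  obtain ⟨M3, hM3nn, hM3⟩ := hbnd 3 (by norm_num)
  obtain ⟨M4, hM4nn, hM4⟩ := hbnd 4 (by norm_num)
  have hEN0 : ∀ s, Real.sqrt (E s) = Real.sqrt (N 0 s) := by
    intro s
    rw [hE, hN]
    simp [iteratedDeriv_zero]
  -- pointwise sup bound, uniform
  have hAg : ∀ s ∈ Icc 0 T, ∀ x, ψ s x ^ 2 ≤ 2 * Real.sqrt (E s) * Real.sqrt (N 1 s) := by
    intro s hs x
    have := myAgmon (hd0 s hs) (hcont0 s hs) (hcontk s hs 1 (by norm_num))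
      (hint0 s hs) (hint s hs 1 (by norm_num)) (hdec0 s hs) x
    simpa [hE, hN] using this
  set R : ℝ := Real.sqrt (2 * M0 * M1) with hRdef
  have hRnn : 0 ≤ R := Real.sqrt_nonneg _
  have hψR : ∀ s ∈ Icc 0 T, ∀ x, |ψ s x| ≤ R := by
    intro s hs x
    have h1 := hAg s hs x
    have h2 : 2 * Real.sqrt (E s) * Real.sqrt (N 1 s) ≤ 2 * M0 * M1 := by
      have ha := hM0 s hs
      have hb := hM1 s hs
      have ha' : Real.sqrt (E s) ≤ M0 := by rw [hEN0]; exact ha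
      nlinarith [Real.sqrt_nonneg (E s), Real.sqrt_nonneg (N 1 s)]
    rw [← Real.sqrt_sq_eq_abs]
    exact le_trans (Real.sqrt_le_sqrt (le_trans h1 h2)) le_rfl
  obtain ⟨B, hB⟩ := (isCompact_Icc (a := uTilde - R) (b := uTilde + R)).exists_bound_of_continuousOn
    ((hf.continuous_deriv one_le_two).continuousOn)
  have hfB : ∀ s ∈ Icc 0 T, ∀ x, |deriv f (ψ s x + uTilde)| ≤ B := by
    intro s hs x
    have h1 := abs_le.1 (hψR s hs x)
    have := hB (ψ s x + uTilde) ⟨by linarith [h1.1], by linarith [h1.2]⟩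
    rwa [Real.norm_eq_abs] at this
  have hBnn : 0 ≤ B := le_trans (abs_nonneg _)
    (hfB 0 h0T 0)
  -- chain rule
  have hDF : ∀ s ∈ Icc 0 T, ∀ x, deriv (fun y => f (ψ s y + uTilde)) x
      = deriv f (ψ s x + uTilde) * iteratedDeriv 1 (ψ s) x := by
    intro s hs x
    exact (((hf.differentiable (by norm_num)) _).hasDerivAt.comp x
      ((hd0 s hs x).add_const uTilde)).deriv
  -- continuity of D in x
  have hDjc : ContinuousOn (fun p : ℝ × ℝ => D p.1 p.2) (Icc 0 T ×ˢ (univ : Set ℝ)) := by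
    simp only [hD]
    exact hsol.timeDerivCont
  have hDcont : ∀ s ∈ Icc 0 T, Continuous (D s) := by
    intro s hs
    rw [← continuousOn_univ]
    have hmap : MapsTo (fun x : ℝ => (s, x)) univ (Icc 0 T ×ˢ (univ : Set ℝ)) :=
      fun x _ => ⟨hs, mem_univ _⟩
    have h2 := hDjc.comp ((continuous_const.prodMk continuous_id).continuousOn) hmap
    exact h2
  -- integrability of D²
  have hDpt : ∀ s ∈ Icc 0 T, ∀ x, D s x ^ 2 ≤ 3 * (B^2 * iteratedDeriv 1 (ψ s) x ^ 2
      + δ^2 * iteratedDeriv 3 (ψ s) x ^ 2 + ν^2 * iteratedDeriv 4 (ψ s) x ^ 2) := by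
    intro s hs x
    have hD' : D s x = -(deriv f (ψ s x + uTilde) * iteratedDeriv 1 (ψ s) x)
        - δ * iteratedDeriv 3 (ψ s) x - ν * iteratedDeriv 4 (ψ s) x := by
      rw [hD]
      simp only
      rw [hDF s hs x]
    have hb := hfB s hs x
    have hb2 : (deriv f (ψ s x + uTilde))^2 ≤ B^2 := by
      have := sq_abs (deriv f (ψ s x + uTilde))
      nlinarith [abs_nonneg (deriv f (ψ s x + uTilde))]
    rw [hD']
    set c := deriv f (ψ s x + uTilde)
    set w := iteratedDeriv 1 (ψ s) x
    set p := iteratedDeriv 3 (ψ s) x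
    set q := iteratedDeriv 4 (ψ s) x
    nlinarith [sq_nonneg (c*w - δ*p), sq_nonneg (c*w - ν*q), sq_nonneg (δ*p - ν*q),
      mul_le_mul_of_nonneg_right hb2 (sq_nonneg w), sq_nonneg w]
  have hGint : ∀ s ∈ Icc 0 T, Integrable (fun x => 3 * (B^2 * iteratedDeriv 1 (ψ s) x ^ 2
      + δ^2 * iteratedDeriv 3 (ψ s) x ^ 2 + ν^2 * iteratedDeriv 4 (ψ s) x ^ 2)) := by
    intro s hs
    exact ((((hint s hs 1 (by norm_num)).const_mul (B^2)).add
      ((hint s hs 3 (by norm_num)).const_mul (δ^2))).add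
      ((hint s hs 4 (by norm_num)).const_mul (ν^2))).const_mul 3
  have hD2int : ∀ s ∈ Icc 0 T, Integrable (fun x => D s x ^ 2) := by
    intro s hs
    refine Integrable.mono' (hGint s hs) (((hDcont s hs).pow 2).aestronglyMeasurable)
      (Eventually.of_forall fun x => ?_)
    rw [Real.norm_eq_abs, abs_of_nonneg (sq_nonneg _)]
    exact hDpt s hs x
  have hNM : ∀ (k : ℕ) (Mk : ℝ), (∀ s ∈ Icc 0 T, Real.sqrt (N k s) ≤ Mk) →
      ∀ s ∈ Icc 0 T, N k s ≤ Mk ^ 2 := by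
    intro k Mk hMk s hs
    have h1 := hMk s hs
    nlinarith [Real.sqrt_nonneg (N k s), Real.sq_sqrt (hNnn k s)]
  have hD2le : ∀ s ∈ Icc 0 T, ∫ x, D s x ^ 2
      ≤ 3 * (B^2 * M1^2 + δ^2 * M3^2 + ν^2 * M4^2) := by
    intro s hs
    have hmono : ∫ x, D s x ^ 2 ≤ ∫ x, 3 * (B^2 * iteratedDeriv 1 (ψ s) x ^ 2
        + δ^2 * iteratedDeriv 3 (ψ s) x ^ 2 + ν^2 * iteratedDeriv 4 (ψ s) x ^ 2) :=
      integral_mono (hD2int s hs) (hGint s hs) (hDpt s hs)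
    have i1 : Integrable (fun x => B^2 * iteratedDeriv 1 (ψ s) x ^ 2) :=
      (hint s hs 1 (by norm_num)).const_mul _
    have i3 : Integrable (fun x => δ^2 * iteratedDeriv 3 (ψ s) x ^ 2) :=
      (hint s hs 3 (by norm_num)).const_mul _
    have i4 : Integrable (fun x => ν^2 * iteratedDeriv 4 (ψ s) x ^ 2) :=
      (hint s hs 4 (by norm_num)).const_mul _
    have i13 : Integrable (fun x => B^2 * iteratedDeriv 1 (ψ s) x ^ 2
        + δ^2 * iteratedDeriv 3 (ψ s) x ^ 2) := by exact i1.add i3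
    have hval : ∫ x, 3 * (B^2 * iteratedDeriv 1 (ψ s) x ^ 2
        + δ^2 * iteratedDeriv 3 (ψ s) x ^ 2 + ν^2 * iteratedDeriv 4 (ψ s) x ^ 2)
        = 3 * (B^2 * N 1 s + δ^2 * N 3 s + ν^2 * N 4 s) := by
      rw [MeasureTheory.integral_const_mul, integral_add i13 i4, integral_add i1 i3,
        MeasureTheory.integral_const_mul, MeasureTheory.integral_const_mul,
        MeasureTheory.integral_const_mul]
    have h1 := hNM 1 M1 hM1 s hs
    have h3 := hNM 3 M3 hM3 s hs
    have h4 := hNM 4 M4 hM4 s hs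
    have e1 := mul_le_mul_of_nonneg_left h1 (sq_nonneg B)
    have e3 := mul_le_mul_of_nonneg_left h3 (sq_nonneg δ)
    have e4 := mul_le_mul_of_nonneg_left h4 (sq_nonneg ν)
    rw [hval] at hmono
    linarith
  -- integrability of 2ψD and uniform bound
  have h2ψDint : ∀ s ∈ Icc 0 T, Integrable (fun x => 2 * (ψ s x * D s x)) := by
    intro s hs
    exact (myProdInt (hcont0 s hs).aestronglyMeasurable (hDcont s hs).aestronglyMeasurable
      (hint0 s hs) (hD2int s hs)).const_mul 2
  set CB : ℝ := M0^2 + 3 * (B^2 * M1^2 + δ^2 * M3^2 + ν^2 * M4^2) with hCBdef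
  have hCB : ∀ s ∈ Icc 0 T, ∫ x, ‖2 * (ψ s x * D s x)‖ ≤ CB := by
    intro s hs
    have habs : ∀ x, ‖2 * (ψ s x * D s x)‖ ≤ ψ s x ^ 2 + D s x ^ 2 := by
      intro x
      rw [Real.norm_eq_abs, abs_mul, abs_mul, abs_two]
      have := sq_abs (ψ s x)
      have := sq_abs (D s x)
      nlinarith [sq_nonneg (|ψ s x| - |D s x|), abs_nonneg (ψ s x), abs_nonneg (D s x)]
    have hm : ∫ x, ‖2 * (ψ s x * D s x)‖ ≤ ∫ x, (ψ s x ^ 2 + D s x ^ 2) :=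
      integral_mono (h2ψDint s hs).norm ((hint0 s hs).add (hD2int s hs)) habs
    have hsplit : ∫ x, (ψ s x ^ 2 + D s x ^ 2) = E s + ∫ x, D s x ^ 2 :=
      integral_add (hint0 s hs) (hD2int s hs)
    have hE' : E s ≤ M0^2 := by
      have := hNM 0 M0 hM0 s hs
      have h2 : E s = N 0 s := by rw [hE, hN]; simp [iteratedDeriv_zero]
      rw [h2]; exact this
    have := hD2le s hs
    rw [hCBdef]
    linarith
  -- energy identity
  have hjc : ContinuousOn (fun p : ℝ × ℝ => ψ p.1 p.2) (Icc 0 T ×ˢ (univ : Set ℝ)) := by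
    have := hsol.jointCont 0 (by norm_num)
    simpa [iteratedDeriv_zero] using this
  have hpde' : ∀ s ∈ Icc 0 T, ∀ x : ℝ,
      HasDerivWithinAt (fun σ => ψ σ x) (D s x) (Icc 0 T) s := by
    intro s hs x
    simp only [hD]
    exact hsol.pde s hs x
  have hEn := fun (s : ℝ) (hs : s ∈ Icc 0 T) =>
    myEnergy T hT ψ D hjc hDjc hpde' hint0 h2ψDint CB hCB s hs
  -- spatial identity
  have hSpa : ∀ s ∈ Icc 0 T, ∫ x, 2 * (ψ s x * D s x) = -(2 * ν) * N 2 s := by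
    intro s hs
    exact mySpatial f hf δ ν uTilde (ψ s) (hsol.smooth s hs) (fun k hk => hint s hs k hk)
      (fun k hk => hsol.decay s hs k hk) (D s) (fun x => by rw [hD]) (hDcont s hs) (hD2int s hs)
  have hEid : ∀ s ∈ Icc 0 T, IntegrableOn (N 2) (Icc 0 s) ∧
      E s - E 0 = -(2 * ν) * ∫ τ in Icc 0 s, N 2 τ := by
    intro s hs
    obtain ⟨hInt1, hId⟩ := hEn s hs
    have hsubI : Icc (0:ℝ) s ⊆ Icc 0 T := Icc_subset_Icc le_rfl hs.2
    have hcongr : ∫ τ in Icc 0 s, (∫ x, 2 * (ψ τ x * D τ x))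
        = ∫ τ in Icc 0 s, -(2 * ν) * N 2 τ :=
      setIntegral_congr_fun measurableSet_Icc (fun τ hτ => hSpa τ (hsubI hτ))
    constructor
    · have hI2 : IntegrableOn (fun τ => -(2 * ν) * N 2 τ) (Icc 0 s) :=
        hInt1.congr ((ae_restrict_iff' measurableSet_Icc).2
          (Eventually.of_forall fun τ hτ => (hSpa τ (hsubI hτ))))
      have hI3 := hI2.const_mul (-(1/(2*ν)))
      refine hI3.congr (Eventually.of_forall fun τ => ?_)
      field_simp
    · rw [hcongr] at hId
      rw [MeasureTheory.integral_const_mul] at hId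
      rw [← hId]
  have hEle : ∀ s ∈ Icc 0 T, E s ≤ r ^ 2 := by
    intro s hs
    obtain ⟨hI, hId⟩ := hEid s hs
    have hpos : 0 ≤ ∫ τ in Icc 0 s, N 2 τ :=
      setIntegral_nonneg measurableSet_Icc (fun τ _ => hNnn 2 τ)
    nlinarith [hId, hE0]
  have hN2int_t : IntegrableOn (N 2) (Icc 0 t) := (hEid t ht).1
  have hN2sum : ∫ τ in Icc 0 t, N 2 τ ≤ r ^ 2 / (2 * ν) := by
    obtain ⟨_, hId⟩ := hEid t ht
    have hEt : 0 ≤ E t := hEnn t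
    rw [le_div_iff₀ (by positivity)]
    rw [hE0] at hId
    nlinarith [hId]
  -- Gagliardo-Nirenberg/Agmon step
  have hDS : ∀ τ ∈ Icc 0 T, N 1 τ ≤ Real.sqrt (E τ) * Real.sqrt (N 2 τ) := by
    intro τ hτ
    have := myDerivSq (hd0 τ hτ) (hdk τ hτ 1 (by norm_num)) (hcont0 τ hτ)
      (hcontk τ hτ 1 (by norm_num)) (hcontk τ hτ 2 (by norm_num))
      (hint0 τ hτ) (hint τ hτ 1 (by norm_num)) (hint τ hτ 2 (by norm_num))
      (hdec0 τ hτ) (hsol.decay τ hτ 1 (by norm_num))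
    simpa [hE, hN] using this
  have hsupb : ∀ τ ∈ Icc 0 t,
      (⨆ x, |ψ τ x|) ^ 8 ≤ 16 * r ^ 6 * N 2 τ ∧
      (⨆ x, |deriv (ψ τ) x|) ^ ((8:ℝ)/3) ≤ 4 * r ^ ((2:ℝ)/3) * N 2 τ := by
    intro τ hτ'
    have hτ := htT hτ'
    set a := Real.sqrt (E τ) with hadef
    set c := Real.sqrt (N 2 τ) with hcdef
    have hann : 0 ≤ a := Real.sqrt_nonneg _
    have hcnn : 0 ≤ c := Real.sqrt_nonneg _
    have hc2 : c ^ 2 = N 2 τ := Real.sq_sqrt (hNnn 2 τ)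
    have har : a ≤ r := by
      rw [hadef]
      calc Real.sqrt (E τ) ≤ Real.sqrt (r ^ 2) := Real.sqrt_le_sqrt (hEle τ hτ)
        _ = r := Real.sqrt_sq hrnn
    have hN1 : N 1 τ ≤ a * c := hDS τ hτ
    set q := Real.sqrt (a * c) with hqdef
    have hqnn : 0 ≤ q := Real.sqrt_nonneg _
    have hq2 : q ^ 2 = a * c := Real.sq_sqrt (mul_nonneg hann hcnn)
    have hsq1 : Real.sqrt (N 1 τ) ≤ q := by
      rw [hqdef]; exact Real.sqrt_le_sqrt hN1
    have hsq1nn : 0 ≤ Real.sqrt (N 1 τ) := Real.sqrt_nonneg _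
    constructor
    · have hptw : ∀ x, |ψ τ x| ≤ Real.sqrt (2 * a * q) := by
        intro x
        rw [← Real.sqrt_sq_eq_abs]
        apply Real.sqrt_le_sqrt
        calc ψ τ x ^ 2 ≤ 2 * a * Real.sqrt (N 1 τ) := hAg τ hτ x
          _ ≤ 2 * a * q := by nlinarith
      have hBdd : BddAbove (range fun x : ℝ => |ψ τ x|) :=
        ⟨Real.sqrt (2 * a * q), forall_mem_range.2 hptw⟩
      have hS : (⨆ x, |ψ τ x|) ≤ Real.sqrt (2 * a * q) := ciSup_le hptw
      have hS0 : 0 ≤ ⨆ x, |ψ τ x| := le_trans (abs_nonneg (ψ τ 0)) (le_ciSup hBdd 0)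
      calc (⨆ x, |ψ τ x|) ^ 8 ≤ Real.sqrt (2 * a * q) ^ 8 := pow_le_pow_left₀ hS0 hS 8
        _ = (2 * a * q) ^ 4 := by
            rw [show (8:ℕ) = 2 * 4 from rfl, pow_mul, Real.sq_sqrt (by positivity)]
        _ = 16 * a ^ 4 * (q ^ 2) ^ 2 := by ring
        _ = 16 * a ^ 6 * c ^ 2 := by rw [hq2]; ring
        _ ≤ 16 * r ^ 6 * c ^ 2 := by
            have h6 : a ^ 6 ≤ r ^ 6 := pow_le_pow_left₀ hann har 6
            nlinarith [sq_nonneg c]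
        _ = 16 * r ^ 6 * N 2 τ := by rw [hc2]
    · have hAg1 : ∀ x, iteratedDeriv 1 (ψ τ) x ^ 2 ≤ 2 * q * c := by
        intro x
        have h0 := myAgmon (hdk τ hτ 1 (by norm_num)) (hcontk τ hτ 1 (by norm_num))
          (hcontk τ hτ 2 (by norm_num)) (hint τ hτ 1 (by norm_num))
          (hint τ hτ 2 (by norm_num)) (hsol.decay τ hτ 1 (by norm_num)) x
        have h1 : iteratedDeriv 1 (ψ τ) x ^ 2
            ≤ 2 * Real.sqrt (N 1 τ) * Real.sqrt (N 2 τ) := by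
          simpa [hN] using h0
        have h2 : 2 * Real.sqrt (N 1 τ) * Real.sqrt (N 2 τ) ≤ 2 * q * c := by
          rw [← hcdef]; nlinarith
        linarith
      have hptw : ∀ x, |deriv (ψ τ) x| ≤ Real.sqrt (2 * q * c) := by
        intro x
        rw [← iteratedDeriv_one, ← Real.sqrt_sq_eq_abs]
        exact Real.sqrt_le_sqrt (hAg1 x)
      have hBdd : BddAbove (range fun x : ℝ => |deriv (ψ τ) x|) :=
        ⟨Real.sqrt (2 * q * c), forall_mem_range.2 hptw⟩
      set u := ⨆ x, |deriv (ψ τ) x| with hudef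
      have hu : u ≤ Real.sqrt (2 * q * c) := ciSup_le hptw
      have hu0 : 0 ≤ u := le_trans (abs_nonneg (deriv (ψ τ) 0)) (le_ciSup hBdd 0)
      have hrhs : 0 ≤ 4 * r ^ ((2:ℝ)/3) * N 2 τ := by
        have := hNnn 2 τ
        positivity
      refine le_of_pow_le_pow_left₀ (n := 3) (by norm_num) hrhs ?_
      have hL : (u ^ ((8:ℝ)/3)) ^ (3:ℕ) = u ^ (8:ℕ) := by
        rw [← Real.rpow_natCast (u ^ ((8:ℝ)/3)) 3, ← Real.rpow_mul hu0,
          show (8:ℝ)/3 * ((3:ℕ):ℝ) = ((8:ℕ):ℝ) by push_cast; norm_num,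
          Real.rpow_natCast]
      have hR3 : (4 * r ^ ((2:ℝ)/3) * N 2 τ) ^ (3:ℕ) = 64 * r ^ 2 * (N 2 τ) ^ 3 := by
        rw [mul_pow, mul_pow, ← Real.rpow_natCast (r ^ ((2:ℝ)/3)) 3, ← Real.rpow_mul hrnn,
          show (2:ℝ)/3 * ((3:ℕ):ℝ) = ((2:ℕ):ℝ) by push_cast; norm_num,
          Real.rpow_natCast]
        norm_num
      rw [hL, hR3]
      have hu8 : u ^ (8:ℕ) ≤ (2 * q * c) ^ 4 := by
        calc u ^ 8 ≤ Real.sqrt (2 * q * c) ^ 8 := pow_le_pow_left₀ hu0 hu 8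
          _ = (2 * q * c) ^ 4 := by
              rw [show (8:ℕ) = 2 * 4 from rfl, pow_mul, Real.sq_sqrt (by positivity)]
      have hfin : (2 * q * c) ^ 4 ≤ 64 * r ^ 2 * (N 2 τ) ^ 3 := by
        have e1 : (2 * q * c) ^ 4 = 16 * (q ^ 2) ^ 2 * c ^ 4 := by ring
        rw [e1, hq2, ← hc2]
        have h2 : a ^ 2 ≤ r ^ 2 := pow_le_pow_left₀ hann har 2
        nlinarith [mul_le_mul_of_nonneg_right h2 (pow_nonneg hcnn 6),
          mul_nonneg (mul_nonneg hrnn hrnn) (pow_nonneg hcnn 6)]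
      linarith
  -- final assembly
  have hN2ii : IntervalIntegrable (N 2) volume 0 t :=
    (intervalIntegrable_iff_integrableOn_Icc_of_le ht.1).2 hN2int_t
  have hN2ival : ∫ τ in (0:ℝ)..t, N 2 τ ≤ r ^ 2 / (2 * ν) := by
    rw [intervalIntegral.integral_of_le ht.1, ← integral_Icc_eq_integral_Ioc]
    exact hN2sum
  have hN2inn : 0 ≤ ∫ τ in (0:ℝ)..t, N 2 τ :=
    intervalIntegral.integral_nonneg ht.1 (fun τ _ => hNnn 2 τ)
  have key1 : ∫ τ in (0:ℝ)..t, (⨆ x, |ψ τ x|) ^ 8 ≤ 8 * r ^ 8 / ν := by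
    have hb : 16 * r ^ 6 * (r ^ 2 / (2 * ν)) = 8 * r ^ 8 / ν := by
      field_simp; ring
    by_cases hii : IntervalIntegrable (fun τ => (⨆ x, |ψ τ x|) ^ 8) volume 0 t
    · calc ∫ τ in (0:ℝ)..t, (⨆ x, |ψ τ x|) ^ 8
          ≤ ∫ τ in (0:ℝ)..t, 16 * r ^ 6 * N 2 τ :=
            intervalIntegral.integral_mono_on ht.1 hii (hN2ii.const_mul _)
              (fun τ hτ => (hsupb τ hτ).1)
        _ = 16 * r ^ 6 * ∫ τ in (0:ℝ)..t, N 2 τ := by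
            rw [intervalIntegral.integral_const_mul]
        _ ≤ 16 * r ^ 6 * (r ^ 2 / (2 * ν)) :=
            mul_le_mul_of_nonneg_left hN2ival (by positivity)
        _ = 8 * r ^ 8 / ν := hb
    · rw [intervalIntegral.integral_undef hii]
      positivity
  have key2 : ∫ τ in (0:ℝ)..t, (⨆ x, |deriv (ψ τ) x|) ^ ((8:ℝ)/3)
      ≤ 2 * |r| ^ ((8:ℝ)/3) / ν := by
    have habs : |r| = r := abs_of_nonneg hrnn
    have hb : 4 * r ^ ((2:ℝ)/3) * (r ^ 2 / (2 * ν)) = 2 * |r| ^ ((8:ℝ)/3) / ν := by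
      rw [habs, show ((8:ℝ)/3) = (2:ℝ)/3 + 2 by norm_num,
        Real.rpow_add' hrnn (by norm_num),
        show r ^ ((2:ℝ)) = r ^ (2:ℕ) by
          rw [← Real.rpow_natCast r 2]; norm_num]
      field_simp
      ring
    by_cases hii : IntervalIntegrable
        (fun τ => (⨆ x, |deriv (ψ τ) x|) ^ ((8:ℝ)/3)) volume 0 t
    · calc ∫ τ in (0:ℝ)..t, (⨆ x, |deriv (ψ τ) x|) ^ ((8:ℝ)/3)
          ≤ ∫ τ in (0:ℝ)..t, 4 * r ^ ((2:ℝ)/3) * N 2 τ :=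
            intervalIntegral.integral_mono_on ht.1 hii (hN2ii.const_mul _)
              (fun τ hτ => (hsupb τ hτ).2)
        _ = 4 * r ^ ((2:ℝ)/3) * ∫ τ in (0:ℝ)..t, N 2 τ := by
            rw [intervalIntegral.integral_const_mul]
        _ ≤ 4 * r ^ ((2:ℝ)/3) * (r ^ 2 / (2 * ν)) :=
            mul_le_mul_of_nonneg_left hN2ival (by positivity)
        _ = 2 * |r| ^ ((8:ℝ)/3) / ν := hb
    · rw [intervalIntegral.integral_undef hii]
      positivity
  linarith [key1, key2]
end

section
/- Let g : ℝ → ℝ be twice continuously differentiable with g, g', g'' ∈ L²(ℝ), and with g(x) → 0 and g'(x) → 0 as |x| → ∞. Then sup_{x∈ℝ} |g(x)| ≤ √2 · ‖g‖_{L²}^{3/4} · ‖g''‖_{L²}^{1/4}. -/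
open MeasureTheory Filter Set intervalIntegral

/-!
Two integrations by parts. Since `g² → 0` at `+∞`, `g(x)² = -∫_x^∞ 2 g g' ≤ 2 ‖g‖ ‖g'‖`, and since
`g g' → 0` at `±∞`, `‖g'‖² = -∫ g g'' ≤ ‖g‖ ‖g''‖` (both by Cauchy–Schwarz). Substituting the second
bound into the first gives `g(x)² ≤ 2 ‖g‖^{3/2} ‖g''‖^{1/2}`.
-/

lemma L2Norm_nonneg (f : ℝ → ℝ) : 0 ≤ L2Norm f :=
  Real.rpow_nonneg (integral_nonneg fun _ => sq_nonneg _) _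

lemma L2Norm_sq (f : ℝ → ℝ) : L2Norm f ^ 2 = ∫ x : ℝ, f x ^ 2 := by
  rw [L2Norm, ← Real.sqrt_eq_rpow, Real.sq_sqrt (integral_nonneg fun _ => sq_nonneg _)]

lemma MemL2.memLp_two {f : ℝ → ℝ} (hf : MemL2 f) (hfm : AEStronglyMeasurable f) : MemLp f 2 :=
  (memLp_two_iff_integrable_sq hfm).mpr hf

lemma MemL2.integrable_mul {f h : ℝ → ℝ} (hf : MemL2 f) (hh : MemL2 h)
    (hfm : AEStronglyMeasurable f) (hhm : AEStronglyMeasurable h) :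
    Integrable (fun x => f x * h x) :=
  (hf.memLp_two hfm).integrable_mul (hh.memLp_two hhm)

lemma integral_abs_mul_le_L2Norm_mul {f h : ℝ → ℝ} (hf : MemL2 f) (hh : MemL2 h)
    (hfm : AEStronglyMeasurable f) (hhm : AEStronglyMeasurable h) :
    ∫ x : ℝ, |f x * h x| ≤ L2Norm f * L2Norm h := by
  have hCS := integral_mul_norm_le_Lp_mul_Lq Real.HolderConjugate.two_two
    (by simpa using hf.memLp_two hfm) (by simpa using hh.memLp_two hhm)
  simpa [abs_mul, L2Norm] using hCS

lemma sq_le_two_mul_L2Norm_mul_L2Norm_deriv {g : ℝ → ℝ} (hg : Differentiable ℝ g)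
    (hg_top : Tendsto g atTop (nhds 0)) (hL2 : MemL2 g) (hL2' : MemL2 (deriv g)) (x : ℝ) :
    g x ^ 2 ≤ 2 * L2Norm g * L2Norm (deriv g) := by
  have hgm : AEStronglyMeasurable g := hg.continuous.aestronglyMeasurable
  have hg'm : AEStronglyMeasurable (deriv g) := (measurable_deriv g).aestronglyMeasurable
  have hint : Integrable (fun t => g t * deriv g t) := hL2.integrable_mul hL2' hgm hg'm
  have hderiv : ∀ t ∈ Ici x, HasDerivAt (fun t => g t ^ 2) (2 * (g t * deriv g t)) t :=
    fun t _ => ((hg t).hasDerivAt.fun_pow 2).congr_deriv (by ring)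
  have hFTC := integral_Ioi_of_hasDerivAt_of_tendsto' hderiv (hint.const_mul 2).integrableOn
    (by simpa using hg_top.pow 2)
  calc g x ^ 2 = -∫ t in Ioi x, 2 * (g t * deriv g t) := by rw [hFTC]; ring
    _ ≤ ∫ t in Ioi x, |2 * (g t * deriv g t)| := (neg_le_abs _).trans abs_integral_le_integral_abs
    _ ≤ ∫ t, |2 * (g t * deriv g t)| :=
        setIntegral_le_integral (hint.const_mul 2).abs (ae_of_all _ fun _ => abs_nonneg _)
    _ = 2 * ∫ t, |g t * deriv g t| := by
        simp only [abs_mul, abs_two, MeasureTheory.integral_const_mul]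
    _ ≤ 2 * (L2Norm g * L2Norm (deriv g)) := by
        gcongr
        exact integral_abs_mul_le_L2Norm_mul hL2 hL2' hgm hg'm
    _ = 2 * L2Norm g * L2Norm (deriv g) := by ring

lemma integral_deriv_sq_eq_neg_integral_mul_deriv_deriv {g : ℝ → ℝ} (hg : Differentiable ℝ g)
    (hg' : Differentiable ℝ (deriv g)) (hbot : Tendsto (fun t => g t * deriv g t) atBot (nhds 0))
    (htop : Tendsto (fun t => g t * deriv g t) atTop (nhds 0))
    (hint' : Integrable (fun t => deriv g t ^ 2))
    (hint'' : Integrable (fun t => g t * deriv (deriv g) t)) :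
    ∫ t, deriv g t ^ 2 = -∫ t, g t * deriv (deriv g) t := by
  have hderiv : ∀ t, HasDerivAt (fun t => g t * deriv g t)
      (deriv g t ^ 2 + g t * deriv (deriv g) t) t :=
    fun t => ((hg t).hasDerivAt.fun_mul (hg' t).hasDerivAt).congr_deriv (by ring)
  have hFTC := integral_of_hasDerivAt_of_tendsto hderiv (hint'.add hint'') hbot htop
  rw [integral_add hint' hint'', sub_self] at hFTC
  linarith

lemma abs_le_sqrt_two_mul_rpow_of_sq_le {y A B C : ℝ} (hA : 0 ≤ A) (hC : 0 ≤ C)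
    (hy : y ^ 2 ≤ 2 * A * B) (hB : B ^ 2 ≤ A * C) :
    |y| ≤ Real.sqrt 2 * A ^ ((3:ℝ)/4) * C ^ ((1:ℝ)/4) := by
  set u := A ^ ((1:ℝ)/4)
  set v := C ^ ((1:ℝ)/4)
  have hA4 : A = u ^ 4 := by rw [← Real.rpow_natCast, ← Real.rpow_mul hA]; norm_num
  have hC4 : C = v ^ 4 := by rw [← Real.rpow_natCast, ← Real.rpow_mul hC]; norm_num
  have hA3 : A ^ ((3:ℝ)/4) = u ^ 3 := by rw [← Real.rpow_natCast, ← Real.rpow_mul hA]; norm_num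
  have hB' : B ≤ u ^ 2 * v ^ 2 :=
    le_of_abs_le (abs_le_of_sq_le_sq (by rw [hA4, hC4] at hB; linarith) (by positivity))
  refine abs_le_of_sq_le_sq ?_ (by positivity)
  calc y ^ 2 ≤ 2 * A * B := hy
    _ ≤ 2 * u ^ 4 * (u ^ 2 * v ^ 2) := by rw [hA4]; gcongr
    _ = (Real.sqrt 2 * u ^ 3 * v) ^ 2 := by rw [mul_pow, mul_pow, Real.sq_sqrt zero_le_two]; ring
    _ = (Real.sqrt 2 * A ^ ((3:ℝ)/4) * v) ^ 2 := by rw [hA3]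

/-- If `g ∈ C²` with `g, g', g'' ∈ L²(ℝ)` and `g(x), g'(x) → 0` as
`|x| → ∞`, then `sup_x |g(x)| ≤ √2 ‖g‖^{3/4} ‖g''‖^{1/4}`. -/
theorem sobolev_sup_bound_second
    (g : ℝ → ℝ) (hg : ContDiff ℝ 2 g)
    (hL2 : MemL2 g) (hL2' : MemL2 (deriv g)) (hL2'' : MemL2 (iteratedDeriv 2 g))
    (hdecay : Tendsto g (cocompact ℝ) (nhds 0))
    (hdecay' : Tendsto (deriv g) (cocompact ℝ) (nhds 0)) :
    ∀ x : ℝ,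
      |g x| ≤ Real.sqrt 2 * L2Norm g ^ ((3:ℝ)/4) * L2Norm (iteratedDeriv 2 g) ^ ((1:ℝ)/4) := by
  intro x
  rw [iteratedDeriv_succ, iteratedDeriv_one] at hL2'' ⊢
  have hgd : Differentiable ℝ g := hg.differentiable two_ne_zero
  have hg'd : Differentiable ℝ (deriv g) := (hg.iterate_deriv' 1 1).differentiable one_ne_zero
  have hgg' : Tendsto (fun t => g t * deriv g t) (cocompact ℝ) (nhds 0) := by
    simpa using hdecay.mul hdecay'
  have hparts := integral_deriv_sq_eq_neg_integral_mul_deriv_deriv hgd hg'd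
    (hgg'.mono_left atBot_le_cocompact) (hgg'.mono_left atTop_le_cocompact) hL2'
    (hL2.integrable_mul hL2'' hgd.continuous.aestronglyMeasurable
      (measurable_deriv _).aestronglyMeasurable)
  refine abs_le_sqrt_two_mul_rpow_of_sq_le (L2Norm_nonneg _) (L2Norm_nonneg _)
    (sq_le_two_mul_L2Norm_mul_L2Norm_deriv hgd (hdecay.mono_left atTop_le_cocompact) hL2 hL2' x) ?_
  calc L2Norm (deriv g) ^ 2 = -∫ t, g t * deriv (deriv g) t := by rw [L2Norm_sq, hparts]
    _ ≤ ∫ t, |g t * deriv (deriv g) t| := (neg_le_abs _).trans abs_integral_le_integral_abs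
    _ ≤ L2Norm g * L2Norm (deriv (deriv g)) :=
        integral_abs_mul_le_L2Norm_mul hL2 hL2'' hgd.continuous.aestronglyMeasurable
          (measurable_deriv _).aestronglyMeasurable
end
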